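/- The Norton–Sakuma algebra of type 3C admits a Frobenius form that is non-zero on the axes: the symmetric bilinear form B on the 3-dimensional commutative ℚ-algebra with basis a₋₁, a₀, a₁ defined by B(a_i, a_i) = 1 for each basis vector and B(a_i, a_j) = 1/64 for i ≠ j satisfies B(x·y, z) = B(x, y·z) for all x, y, z in the algebra. -/
import Mathlib

/-- The multiplication of the Norton–Sakuma algebra of type 3C on `ℚ³`,
with basis `a₋₁, a₀, a₁` indexed by `0, 1, 2`. -/
def mul3C (x y : Fin 3 → ℚ) : Fin 3 → ℚ :=
  ![x 0 * y 0 + (1/64) * (x 0 * y 1 + x 1 * y 0 + x 0 * y 2 + x 2 * y 0 - x 1 * y 2 - x 2 * y 1),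
    x 1 * y 1 + (1/64) * (x 0 * y 1 + x 1 * y 0 - x 0 * y 2 - x 2 * y 0 + x 1 * y 2 + x 2 * y 1),
    x 2 * y 2 + (1/64) * (-(x 0 * y 1) - x 1 * y 0 + x 0 * y 2 + x 2 * y 0 + x 1 * y 2 + x 2 * y 1)]

/-- The basis vectors `a₋₁, a₀, a₁` of the 3C algebra (indexed by `0, 1, 2`). -/
def a3C (i : Fin 3) : Fin 3 → ℚ := Pi.single i 1

/-- The bilinear form with `B(aᵢ,aᵢ) = 1` and `B(aᵢ,aⱼ) = 1/64` for `i ≠ j`. -/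
def B3C (x y : Fin 3 → ℚ) : ℚ :=
  x 0 * y 0 + x 1 * y 1 + x 2 * y 2 +
    (1/64) * (x 0 * y 1 + x 1 * y 0 + x 0 * y 2 + x 2 * y 0 + x 1 * y 2 + x 2 * y 1)

/-- The Norton–Sakuma algebra of type 3C admits a Frobenius form that is
non-zero on the axes: the form `B3C` takes value `1` on each basis vector,
`1/64` on distinct basis vectors, and associates with the product. -/
theorem nortonSakuma3C_frobenius :
    (∀ i : Fin 3, B3C (a3C i) (a3C i) = 1) ∧
    (∀ i j : Fin 3, i ≠ j → B3C (a3C i) (a3C j) = 1/64) ∧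
    (∀ x y z : Fin 3 → ℚ, B3C (mul3C x y) z = B3C x (mul3C y z)) := by
  refine ⟨?_, ?_, ?_⟩
  · intro i
    fin_cases i <;> norm_num [B3C, a3C, Pi.single_apply, Fin.ext_iff]
  · intro i j h
    fin_cases i <;> fin_cases j <;> simp_all <;> norm_num [B3C, a3C, Pi.single_apply, Fin.ext_iff]
  · intro x y z
    simp only [B3C, mul3C, Matrix.cons_val_zero, Matrix.cons_val_one, Matrix.head_cons,
      Matrix.cons_val_two, Matrix.tail_cons]
    ring
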